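/- Let C_{Γ(LV,ω,1)} be the class of all finite Kripke models whose frame consists of a root x and two disjoint nonempty finite sets C0 and C1 not containing x, where the accessibility relation R is the reflexive relation with C0×C0 ⊆ R, C1×C1 ⊆ R, x R y for every world y, and no other pairs (a root below exactly two finite clusters of final worlds). Then C_{Γ(LV,ω,1)} enjoys 3-IP. -/

import Mathlib

/-- Modal formulas over countably many variables. -/
inductive ModalForm : Type where
  | var : ℕ → ModalForm
  | bot : ModalForm
  | and : ModalForm → ModalForm → ModalForm
  | or : ModalForm → ModalForm → ModalForm
  | not : ModalForm → ModalForm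
  | imp : ModalForm → ModalForm → ModalForm
  | box : ModalForm → ModalForm

namespace ModalForm

mutual
  /-- positively occurring variables -/
  def vpos : ModalForm → Finset ℕ
    | var p => {p}
    | bot => ∅
    | and φ ψ => vpos φ ∪ vpos ψ
    | or φ ψ => vpos φ ∪ vpos ψ
    | not φ => vneg φ
    | imp φ ψ => vneg φ ∪ vpos ψ
    | box φ => vpos φ
  /-- negatively occurring variables -/
  def vneg : ModalForm → Finset ℕ
    | var _ => ∅
    | bot => ∅
    | and φ ψ => vneg φ ∪ vneg ψ
    | or φ ψ => vneg φ ∪ vneg ψ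
    | not φ => vpos φ
    | imp φ ψ => vpos φ ∪ vneg ψ
    | box φ => vneg φ
end

/-- Modal depth: maximal nesting of `□`. -/
def depth : ModalForm → ℕ
  | var _ => 0
  | bot => 0
  | and φ ψ => max (depth φ) (depth ψ)
  | or φ ψ => max (depth φ) (depth ψ)
  | not φ => depth φ
  | imp φ ψ => max (depth φ) (depth ψ)
  | box φ => depth φ + 1

/-- `◇φ := ¬□¬φ` -/
def dia (φ : ModalForm) : ModalForm := not (box (not φ))

/-- `⊤ := ¬⊥` -/
def top : ModalForm := not bot

end ModalForm

/-- An S4 Kripke frame: nonempty set of worlds with a reflexive transitive relation. -/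
structure KFrame : Type 1 where
  W : Type
  R : W → W → Prop
  nonempty : Nonempty W
  refl : ∀ x, R x x
  trans : ∀ x y z, R x y → R y z → R x z

/-- A Kripke model: a frame with a valuation. -/
structure KModel : Type 1 extends KFrame where
  val : W → ℕ → Prop

/-- The model based on frame `F` with valuation `V`. -/
def KFrame.toModel (F : KFrame) (V : F.W → ℕ → Prop) : KModel :=
  { toKFrame := F, val := V }

/-- Satisfaction in a Kripke model. -/
def KModel.Sat (M : KModel) : M.W → ModalForm → Prop
  | w, .var p => M.val w p
  | _, .bot => False
  | w, .and φ ψ => M.Sat w φ ∧ M.Sat w ψ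
  | w, .or φ ψ => M.Sat w φ ∨ M.Sat w ψ
  | w, .not φ => ¬ M.Sat w φ
  | w, .imp φ ψ => M.Sat w φ → M.Sat w ψ
  | w, .box φ => ∀ y, M.R w y → M.Sat y φ

/-- `(M0,w0) →ₙ^{(P⁺,P⁻)} (M1,w1)`: every `(P⁺,P⁻)`-formula of depth ≤ n
satisfied at `(M0,w0)` is satisfied at `(M1,w1)`. -/
def ModalArrow (Pp Pm : Finset ℕ) (n : ℕ) (M0 : KModel) (w0 : M0.W)
    (M1 : KModel) (w1 : M1.W) : Prop :=
  ∀ φ : ModalForm, φ.vpos ⊆ Pp → φ.vneg ⊆ Pm → φ.depth ≤ n →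
    M0.Sat w0 φ → M1.Sat w1 φ

/-- p-morphism between frames. -/
def PMorphism (F G : KFrame) (f : F.W → G.W) : Prop :=
  (∀ x y, F.R x y → G.R (f x) (f y)) ∧
  (∀ x w, G.R (f x) w → ∃ z, F.R x z ∧ f z = w)

/-- The class `C` of Kripke models enjoys `n`-IP. -/
def EnjoysIP (C : Set KModel) (n : ℕ) : Prop :=
  ∀ (Pp Pm : Finset ℕ) (M0 M1 : KModel), M0 ∈ C → M1 ∈ C →
    ∀ (w0 : M0.W) (w1 : M1.W), ModalArrow Pp Pm n M0 w0 M1 w1 →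
      ∃ (F : KFrame) (wstar : F.W) (f0 : F.W → M0.W) (f1 : F.W → M1.W),
        (∀ V : F.W → ℕ → Prop, F.toModel V ∈ C) ∧
        PMorphism F M0.toKFrame f0 ∧
        PMorphism F M1.toKFrame f1 ∧
        f0 wstar = w0 ∧ f1 wstar = w1 ∧
        ∀ x : F.W, ModalArrow Pp Pm 0 M0 (f0 x) M1 (f1 x)

/-- A world is final iff every successor is also a predecessor. -/
def KModel.Final (M : KModel) (w : M.W) : Prop := ∀ y, M.R w y → M.R y w

/-- The cluster of a world. -/
def KModel.cluster (M : KModel) (w : M.W) : Set M.W := {u | M.R w u ∧ M.R u w}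

/-- Cluster `C0` of `M0` matches cluster `C1` of `M1`. -/
def Matches (Pp Pm : Finset ℕ) (M0 M1 : KModel) (C0 : Set M0.W) (C1 : Set M1.W) : Prop :=
  (∀ u0 ∈ C0, ∃ u1 ∈ C1, ModalArrow Pp Pm 0 M0 u0 M1 u1) ∧
  (∀ u1 ∈ C1, ∃ u0 ∈ C0, ModalArrow Pp Pm 0 M0 u0 M1 u1)

/-- `φ` is satisfied at every world of every model in `C`. -/
def ValidOn (C : Set KModel) (φ : ModalForm) : Prop :=
  ∀ M ∈ C, ∀ w : M.W, M.Sat w φ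

/-- The class of Γ(LV,ω,1) models: a root below exactly two
nonempty finite clusters of final worlds. -/
def C_LVo1 : Set KModel :=
  {M | Finite M.W ∧ ∃ (x : M.W) (C0 C1 : Set M.W),
    x ∉ C0 ∧ x ∉ C1 ∧ Disjoint C0 C1 ∧
    C0.Nonempty ∧ C1.Nonempty ∧
    (∀ w : M.W, w = x ∨ w ∈ C0 ∨ w ∈ C1) ∧
    ∀ u v : M.W, M.R u v ↔
      (u = v ∨ (u ∈ C0 ∧ v ∈ C0) ∨ (u ∈ C1 ∧ v ∈ C1) ∨ u = x)}

/-!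
Seen from any world `w` of a model of the class there are only `w` and (at most) two final
clusters. Depth-0 transfer from a world `u` is expressed by its characteristic formula `χᵤ`, and
a final cluster `C` is pinned down, up to matching, by Moss's cover formula `∇{χᵤ : u ∈ C}` of
depth 1. Transferring `◇□∇{χᵤ : u ∈ C}` along `→₃` shows that every cluster seen from `w0`
matches some cluster seen from `w1`; the same argument for the converse arrow of
`(P⁻,P⁺)`-formulas gives the converse, and Hall's theorem for two clusters pairs them off
bijectively. The interpolating frame is a root below one cluster per matched pair of clusters,
consisting of the pairs of worlds that match; the two projections are p-morphisms.
-/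

namespace ModalForm

def conj (l : List ModalForm) : ModalForm := l.foldr and top

def disj (l : List ModalForm) : ModalForm := l.foldr or bot

/-- Moss's cover modality `∇`. -/
def nabla (l : List ModalForm) : ModalForm :=
  and (conj (l.map dia)) (box (disj l))

def InFragment (Pp Pm : Finset ℕ) (n : ℕ) (φ : ModalForm) : Prop :=
  φ.vpos ⊆ Pp ∧ φ.vneg ⊆ Pm ∧ φ.depth ≤ n

namespace InFragment

variable {Pp Pm : Finset ℕ} {n : ℕ} {φ ψ : ModalForm}

theorem var {p : ℕ} (hp : p ∈ Pp) : InFragment Pp Pm n (var p) := by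
  simp [InFragment, vpos, vneg, depth, hp]

theorem top : InFragment Pp Pm n top := by
  simp [InFragment, ModalForm.top, vpos, vneg, depth]

theorem bot : InFragment Pp Pm n bot := by
  simp [InFragment, vpos, vneg, depth]

theorem not (h : InFragment Pm Pp n φ) : InFragment Pp Pm n (not φ) :=
  ⟨h.2.1, h.1, h.2.2⟩

theorem and (hφ : InFragment Pp Pm n φ) (hψ : InFragment Pp Pm n ψ) :
    InFragment Pp Pm n (and φ ψ) :=
  ⟨Finset.union_subset hφ.1 hψ.1, Finset.union_subset hφ.2.1 hψ.2.1, max_le hφ.2.2 hψ.2.2⟩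

theorem or (hφ : InFragment Pp Pm n φ) (hψ : InFragment Pp Pm n ψ) :
    InFragment Pp Pm n (or φ ψ) :=
  ⟨Finset.union_subset hφ.1 hψ.1, Finset.union_subset hφ.2.1 hψ.2.1, max_le hφ.2.2 hψ.2.2⟩

theorem box (h : InFragment Pp Pm n φ) : InFragment Pp Pm (n + 1) (box φ) :=
  ⟨h.1, h.2.1, Nat.succ_le_succ h.2.2⟩

theorem dia (h : InFragment Pp Pm n φ) : InFragment Pp Pm (n + 1) (dia φ) :=
  h.not.box.not

theorem conj {l : List ModalForm} (h : ∀ φ ∈ l, InFragment Pp Pm n φ) :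
    InFragment Pp Pm n (conj l) := by
  induction l with
  | nil => exact top
  | cons φ l ih => exact (h φ (by simp)).and (ih fun ψ hψ => h ψ (by simp [hψ]))

theorem disj {l : List ModalForm} (h : ∀ φ ∈ l, InFragment Pp Pm n φ) :
    InFragment Pp Pm n (disj l) := by
  induction l with
  | nil => exact bot
  | cons φ l ih => exact (h φ (by simp)).or (ih fun ψ hψ => h ψ (by simp [hψ]))

theorem nabla {l : List ModalForm} (h : ∀ φ ∈ l, InFragment Pp Pm n φ) :
    InFragment Pp Pm (n + 1) (nabla l) :=
  (conj (by simpa using fun φ hφ => (h φ hφ).dia)).and (disj h).box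

end InFragment

end ModalForm

open ModalForm

namespace KModel

variable (M : KModel)

theorem sat_conj (w : M.W) (l : List ModalForm) : M.Sat w (conj l) ↔ ∀ φ ∈ l, M.Sat w φ := by
  induction l with
  | nil => simp [conj, ModalForm.top, Sat]
  | cons φ l ih => simp only [conj, List.foldr_cons, Sat] at ih ⊢; simp [ih]

theorem sat_disj (w : M.W) (l : List ModalForm) : M.Sat w (disj l) ↔ ∃ φ ∈ l, M.Sat w φ := by
  induction l with
  | nil => simp [disj, Sat]
  | cons φ l ih => simp only [disj, List.foldr_cons, Sat] at ih ⊢; simp [ih]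

theorem sat_dia (w : M.W) (φ : ModalForm) : M.Sat w (dia φ) ↔ ∃ y, M.R w y ∧ M.Sat y φ := by
  simp [dia, Sat]

theorem sat_nabla_map {α : Type*} (w : M.W) (s : List α) (f : α → ModalForm) :
    M.Sat w (nabla (s.map f)) ↔
      (∀ x ∈ s, ∃ y, M.R w y ∧ M.Sat y (f x)) ∧ ∀ y, M.R w y → ∃ x ∈ s, M.Sat y (f x) := by
  simp [nabla, Sat, sat_conj, sat_disj, sat_dia]

end KModel

theorem KModel.sat_of_depth_eq_zero {M0 M1 : KModel} {u : M0.W} {v : M1.W} {φ : ModalForm}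
    (hd : φ.depth = 0) (hpos : ∀ p ∈ φ.vpos, M0.val u p → M1.val v p)
    (hneg : ∀ p ∈ φ.vneg, M1.val v p → M0.val u p) : M0.Sat u φ → M1.Sat v φ := by
  induction φ generalizing M0 M1 u v with
  | var p => exact hpos p (Finset.mem_singleton_self p)
  | bot => exact id
  | and φ ψ ihφ ihψ =>
    simp only [depth, Nat.max_eq_zero_iff, vpos, vneg, Finset.mem_union] at hd hpos hneg
    exact fun h => ⟨ihφ hd.1 (fun p hp => hpos p (.inl hp)) (fun p hp => hneg p (.inl hp)) h.1,
      ihψ hd.2 (fun p hp => hpos p (.inr hp)) (fun p hp => hneg p (.inr hp)) h.2⟩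
  | or φ ψ ihφ ihψ =>
    simp only [depth, Nat.max_eq_zero_iff, vpos, vneg, Finset.mem_union] at hd hpos hneg
    exact Or.imp (ihφ hd.1 (fun p hp => hpos p (.inl hp)) (fun p hp => hneg p (.inl hp)))
      (ihψ hd.2 (fun p hp => hpos p (.inr hp)) (fun p hp => hneg p (.inr hp)))
  | not φ ih => exact mt (ih hd hneg hpos)
  | imp φ ψ ihφ ihψ =>
    simp only [depth, Nat.max_eq_zero_iff, vpos, vneg, Finset.mem_union] at hd hpos hneg
    exact fun h hφ => ihψ hd.2 (fun p hp => hpos p (.inr hp)) (fun p hp => hneg p (.inr hp))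
      (h (ihφ hd.1 (fun p hp => hneg p (.inl hp)) (fun p hp => hpos p (.inl hp)) hφ))
  | box φ => simp [depth] at hd

section ModalArrow

variable {Pp Pm : Finset ℕ} {n : ℕ} {M0 M1 : KModel} {w0 : M0.W} {w1 : M1.W}

theorem ModalArrow.sat (H : ModalArrow Pp Pm n M0 w0 M1 w1) {φ : ModalForm}
    (hφ : φ.InFragment Pp Pm n) : M0.Sat w0 φ → M1.Sat w1 φ :=
  H φ hφ.1 hφ.2.1 hφ.2.2

theorem ModalArrow.mono {m : ℕ} (H : ModalArrow Pp Pm n M0 w0 M1 w1) (hmn : m ≤ n) :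
    ModalArrow Pp Pm m M0 w0 M1 w1 :=
  fun φ hp hm hd => H φ hp hm (hd.trans hmn)

/-- Negation turns the transfer of `(P⁺,P⁻)`-formulas into the reverse transfer of
`(P⁻,P⁺)`-formulas. -/
theorem ModalArrow.symm (H : ModalArrow Pp Pm n M0 w0 M1 w1) : ModalArrow Pm Pp n M1 w1 M0 w0 :=
  fun φ hp hm hd h1 => by_contra fun h0 => H (.not φ) hm hp hd h0 h1

theorem modalArrow_zero_iff {u : M0.W} {v : M1.W} :
    ModalArrow Pp Pm 0 M0 u M1 v ↔
      (∀ p ∈ Pp, M0.val u p → M1.val v p) ∧ ∀ p ∈ Pm, M1.val v p → M0.val u p := by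
  refine ⟨fun H => ⟨fun p hp => H.sat (.var hp), fun p hp h1 => by_contra fun h0 =>
    H.sat (φ := .not (.var p)) (.not (.var hp)) h0 h1⟩, fun h φ hp hm hd => ?_⟩
  exact KModel.sat_of_depth_eq_zero (Nat.le_zero.1 hd) (fun p hq => h.1 p (hp hq))
    (fun p hq => h.2 p (hm hq))

theorem Matches.symm {C0 : Set M0.W} {C1 : Set M1.W} (h : Matches Pp Pm M0 M1 C0 C1) :
    Matches Pm Pp M1 M0 C1 C0 :=
  ⟨fun u hu => (h.2 u hu).imp fun _ h' => ⟨h'.1, h'.2.symm⟩,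
    fun u hu => (h.1 u hu).imp fun _ h' => ⟨h'.1, h'.2.symm⟩⟩

end ModalArrow

open Classical in
noncomputable def KModel.charFormula (M : KModel) (P Q : Finset ℕ) (u : M.W) : ModalForm :=
  conj ((P.filter (M.val u ·)).toList.map var ++
    (Q.filter (¬ M.val u ·)).toList.map (ModalForm.not ∘ var))

theorem KModel.charFormula_inFragment (M : KModel) (P Q : Finset ℕ) (u : M.W) :
    (M.charFormula P Q u).InFragment P Q 0 := by
  refine InFragment.conj (l := _) fun φ hφ => ?_
  simp only [List.mem_append, List.mem_map, Finset.mem_toList, Finset.mem_filter] at hφ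
  rcases hφ with ⟨p, ⟨hp, -⟩, rfl⟩ | ⟨p, ⟨hp, -⟩, rfl⟩
  exacts [.var hp, .not (.var hp)]

theorem KModel.sat_charFormula_iff (M N : KModel) (P Q : Finset ℕ) (u : M.W) (v : N.W) :
    N.Sat v (M.charFormula P Q u) ↔
      (∀ p ∈ P, M.val u p → N.val v p) ∧ ∀ p ∈ Q, N.val v p → M.val u p := by
  simp only [charFormula, sat_conj, List.mem_append, List.mem_map, Finset.mem_toList,
    Finset.mem_filter]
  refine ⟨fun h => ⟨fun p hp hu => h _ (.inl ⟨p, ⟨hp, hu⟩, rfl⟩),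
    fun p hp hv => by_contra fun hu => h _ (.inr ⟨p, ⟨hp, hu⟩, rfl⟩) hv⟩, ?_⟩
  rintro ⟨h1, h2⟩ φ (⟨p, ⟨hp, hu⟩, rfl⟩ | ⟨p, ⟨hp, hu⟩, rfl⟩)
  exacts [h1 p hp hu, fun hv => hu (h2 p hp hv)]

theorem KModel.sat_charFormula_self (M : KModel) (P Q : Finset ℕ) (u : M.W) :
    M.Sat u (M.charFormula P Q u) :=
  (sat_charFormula_iff M M P Q u u).2 ⟨fun _ _ => id, fun _ _ => id⟩

theorem KModel.sat_charFormula_iff_modalArrow {Pp Pm : Finset ℕ} (M0 M1 : KModel) (u : M0.W)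
    (v : M1.W) : M1.Sat v (M0.charFormula Pp Pm u) ↔ ModalArrow Pp Pm 0 M0 u M1 v := by
  rw [sat_charFormula_iff, modalArrow_zero_iff]

namespace KModel

variable {M : KModel} {a u v : M.W}

theorem mem_cluster_self (a : M.W) : a ∈ M.cluster a := ⟨M.refl a, M.refl a⟩

theorem rel_of_mem_cluster (hu : u ∈ M.cluster a) (hv : v ∈ M.cluster a) : M.R u v :=
  M.trans u a v hu.2 hv.1

theorem Final.rel_iff (ha : M.Final a) : M.R a v ↔ v ∈ M.cluster a :=
  ⟨fun h => ⟨h, ha v h⟩, And.left⟩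

theorem Final.mem_cluster_of_rel (ha : M.Final a) (hu : u ∈ M.cluster a) (huv : M.R u v) :
    v ∈ M.cluster a :=
  ha.rel_iff.1 (M.trans a u v hu.1 huv)

theorem Final.sat_nabla_map_iff {α : Type*} (hv : M.Final v) (s : List α) (f : α → ModalForm) :
    M.Sat v (nabla (s.map f)) ↔
      (∀ x ∈ s, ∃ y ∈ M.cluster v, M.Sat y (f x)) ∧ ∀ y ∈ M.cluster v, ∃ x ∈ s, M.Sat y (f x) := by
  simp only [M.sat_nabla_map, hv.rel_iff]

theorem Final.sat_box_nabla_charFormula (ha : M.Final a) {s : List M.W}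
    (hs : ∀ u, u ∈ s ↔ u ∈ M.cluster a) (P Q : Finset ℕ) :
    M.Sat a (box (nabla (s.map (M.charFormula P Q)))) := fun y hy => by
  have hya : y ∈ M.cluster a := ha.rel_iff.1 hy
  exact (M.sat_nabla_map y s _).2
    ⟨fun u hu => ⟨u, rel_of_mem_cluster hya ((hs u).1 hu), M.sat_charFormula_self P Q u⟩,
      fun z hz => ⟨z, (hs z).2 (ha.mem_cluster_of_rel hya hz), M.sat_charFormula_self P Q z⟩⟩

theorem Final.matches_of_sat_nabla {Pp Pm : Finset ℕ} {M0 M1 : KModel} {C : Set M0.W}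
    {s : List M0.W} (hs : ∀ u, u ∈ s ↔ u ∈ C) {v : M1.W} (hv : M1.Final v)
    (h : M1.Sat v (nabla (s.map (M0.charFormula Pp Pm)))) :
    Matches Pp Pm M0 M1 C (M1.cluster v) := by
  simpa only [Matches, hv.sat_nabla_map_iff, sat_charFormula_iff_modalArrow, hs] using h

end KModel

/-- Transfer `◇□∇{χᵤ : u ∈ M0.cluster a}` from `w0` to `w1`, where
`χᵤ := M0.charFormula Pp Pm u`. -/
theorem ModalArrow.exists_forall_final_matches {Pp Pm : Finset ℕ} {M0 M1 : KModel} {w0 : M0.W}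
    {w1 : M1.W} (H : ModalArrow Pp Pm 3 M0 w0 M1 w1) {a : M0.W} (ha : M0.Final a)
    (hwa : M0.R w0 a) (hfin : (M0.cluster a).Finite) :
    ∃ y, M1.R w1 y ∧ ∀ v, M1.R y v → M1.Final v →
      Matches Pp Pm M0 M1 (M0.cluster a) (M1.cluster v) := by
  obtain ⟨s, hs⟩ : ∃ s : List M0.W, ∀ u, u ∈ s ↔ u ∈ M0.cluster a :=
    ⟨hfin.toFinset.toList, by simp⟩
  have hφ : (dia (box (nabla (s.map (M0.charFormula Pp Pm))))).InFragment Pp Pm 3 :=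
    (InFragment.nabla (by simpa using fun u _ => M0.charFormula_inFragment Pp Pm u)).box.dia
  obtain ⟨y, hy, hbox⟩ := (KModel.sat_dia _ _ _).1
    (H.sat hφ ((KModel.sat_dia _ _ _).2 ⟨a, hwa, ha.sat_box_nabla_charFormula hs Pp Pm⟩))
  exact ⟨y, hy, fun v hv hfv => hfv.matches_of_sat_nabla hs (hbox v hv)⟩

/-- The two clusters may coincide, as they do when `w` is itself final. -/
structure KModel.TwoClusterCone (M : KModel) (w : M.W) (a : Bool → M.W) : Prop where
  final : ∀ b, M.Final (a b)
  rel_iff : ∀ v, M.R w v ↔ v = w ∨ ∃ b, v ∈ M.cluster (a b)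

namespace KModel.TwoClusterCone

variable {M : KModel} {w : M.W} {a : Bool → M.W}

theorem of_final (hw : M.Final w) : M.TwoClusterCone w fun _ => w where
  final _ := hw
  rel_iff v := by
    refine ⟨fun h => .inr ⟨true, hw.rel_iff.1 h⟩, ?_⟩
    rintro (rfl | ⟨-, hv⟩)
    exacts [M.refl v, hv.1]

theorem rel (h : M.TwoClusterCone w a) (b : Bool) : M.R w (a b) :=
  (h.rel_iff _).2 (.inr ⟨b, mem_cluster_self _⟩)

theorem exists_rel (h : M.TwoClusterCone w a) {y : M.W} (hy : M.R w y) : ∃ b, M.R y (a b) := by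
  rcases (h.rel_iff y).1 hy with rfl | ⟨b, hb⟩
  exacts [⟨true, h.rel true⟩, ⟨b, hb.2⟩]

theorem comp_perm (h : M.TwoClusterCone w a) (σ : Equiv.Perm Bool) :
    M.TwoClusterCone w (a ∘ σ) where
  final b := h.final (σ b)
  rel_iff v := by rw [h.rel_iff, σ.surjective.exists]; rfl

end KModel.TwoClusterCone

section Matching

variable {Pp Pm : Finset ℕ} {M0 M1 : KModel} {w0 : M0.W} {w1 : M1.W} {a0 : Bool → M0.W}
  {a1 : Bool → M1.W}

theorem ModalArrow.exists_matches_right [Finite M0.W] (H : ModalArrow Pp Pm 3 M0 w0 M1 w1)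
    (h0 : M0.TwoClusterCone w0 a0) (h1 : M1.TwoClusterCone w1 a1) (b : Bool) :
    ∃ c, Matches Pp Pm M0 M1 (M0.cluster (a0 b)) (M1.cluster (a1 c)) := by
  obtain ⟨y, hy, hmatch⟩ := H.exists_forall_final_matches (h0.final b) (h0.rel b) (Set.toFinite _)
  obtain ⟨c, hc⟩ := h1.exists_rel hy
  exact ⟨c, hmatch _ hc (h1.final c)⟩

theorem ModalArrow.exists_matches_left [Finite M1.W] (H : ModalArrow Pp Pm 3 M0 w0 M1 w1)
    (h0 : M0.TwoClusterCone w0 a0) (h1 : M1.TwoClusterCone w1 a1) (c : Bool) :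
    ∃ b, Matches Pp Pm M0 M1 (M0.cluster (a0 b)) (M1.cluster (a1 c)) :=
  (H.symm.exists_matches_right h1 h0 c).imp fun _ h => h.symm

end Matching

theorem Bool.exists_perm_forall_of_forall_exists {r : Bool → Bool → Prop}
    (h1 : ∀ b, ∃ c, r b c) (h2 : ∀ c, ∃ b, r b c) : ∃ σ : Equiv.Perm Bool, ∀ b, r b (σ b) := by
  obtain ⟨c0, hc0⟩ := h1 false
  obtain ⟨c1, hc1⟩ := h1 true
  obtain ⟨b0, hb0⟩ := h2 false
  obtain ⟨b1, hb1⟩ := h2 true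
  have hid : r false false → r true true → ∃ σ : Equiv.Perm Bool, ∀ b, r b (σ b) :=
    fun h h' => ⟨Equiv.refl _, Bool.forall_bool.2 ⟨h, h'⟩⟩
  have hswap : r false true → r true false → ∃ σ : Equiv.Perm Bool, ∀ b, r b (σ b) :=
    fun h h' => ⟨Equiv.swap false true, Bool.forall_bool.2 ⟨by simpa using h, by simpa using h'⟩⟩
  cases c0 <;> cases c1 <;> cases b0 <;> cases b1 <;> first
    | exact hid ‹_› ‹_› | exact hswap ‹_› ‹_›

namespace TwoClusterFrame

variable (X : Bool → Type)

/-- `none` is the root; `some ⟨b, x⟩` lies in the `b`-th cluster. -/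
def Rel : Option (Σ b, X b) → Option (Σ b, X b) → Prop
  | none, _ => True
  | some _, none => False
  | some p, some q => p.1 = q.1

def frame : KFrame where
  W := Option (Σ b, X b)
  R := Rel X
  nonempty := ⟨none⟩
  refl := by rintro (_ | _) <;> simp [Rel]
  trans := by rintro (_ | _) (_ | _) (_ | _) <;> simp_all [Rel]

theorem toModel_mem [∀ b, Finite (X b)] [∀ b, Nonempty (X b)] (V : (frame X).W → ℕ → Prop) :
    (frame X).toModel V ∈ C_LVo1 := by
  dsimp only [C_LVo1, KFrame.toModel, frame, Set.mem_ofPred_eq]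
  refine ⟨inferInstanceAs (Finite (Option (Σ b, X b))), none, {z | ∃ x, z = some ⟨false, x⟩},
    {z | ∃ x, z = some ⟨true, x⟩}, by simp, by simp, ?_, ?_, ?_, ?_, ?_⟩
  · exact Set.disjoint_left.2 fun z ⟨x, hx⟩ ⟨y, hy⟩ => by simp [hx] at hy
  · exact ⟨_, Classical.arbitrary _, rfl⟩
  · exact ⟨_, Classical.arbitrary _, rfl⟩
  · rintro (_ | ⟨_ | _, x⟩) <;> simp
  · rintro (_ | ⟨_ | _, x⟩) (_ | ⟨_ | _, y⟩) <;> simp [Rel]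

variable {X}

def map {M : KModel} (w : M.W) (g : ∀ b, X b → M.W) : Option (Σ b, X b) → M.W
  | none => w
  | some ⟨b, x⟩ => g b x

theorem pMorphism_map {M : KModel} {w : M.W} {a : Bool → M.W} (h : M.TwoClusterCone w a)
    {g : ∀ b, X b → M.W} (hg : ∀ b, Set.range (g b) = M.cluster (a b)) :
    PMorphism (frame X) M.toKFrame (map w g) := by
  have hmem b x : g b x ∈ M.cluster (a b) := hg b ▸ ⟨x, rfl⟩
  refine ⟨?_, ?_⟩
  · rintro (_ | ⟨b, x⟩) (_ | ⟨c, y⟩) hR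
    · exact M.refl w
    · exact (h.rel_iff _).2 (.inr ⟨c, hmem c y⟩)
    · exact hR.elim
    · obtain rfl : b = c := hR
      exact KModel.rel_of_mem_cluster (hmem b x) (hmem b y)
  · rintro (_ | ⟨b, x⟩) v hv
    · rcases (h.rel_iff v).1 hv with rfl | ⟨b, hb⟩
      · exact ⟨none, trivial, rfl⟩
      · obtain ⟨x, rfl⟩ := (hg b).symm ▸ hb
        exact ⟨some ⟨b, x⟩, trivial, rfl⟩
    · obtain ⟨y, rfl⟩ := (hg b).symm ▸ (h.final b).mem_cluster_of_rel (hmem b x) hv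
      exact ⟨some ⟨b, y⟩, rfl, rfl⟩

end TwoClusterFrame

section Interpolant

variable {Pp Pm : Finset ℕ} {M0 M1 : KModel}

abbrev MatchingPairs (Pp Pm : Finset ℕ) (M0 M1 : KModel) (C0 : Set M0.W) (C1 : Set M1.W) :
    Type :=
  {p : M0.W × M1.W // p.1 ∈ C0 ∧ p.2 ∈ C1 ∧ ModalArrow Pp Pm 0 M0 p.1 M1 p.2}

theorem Matches.range_fst {C0 : Set M0.W} {C1 : Set M1.W} (h : Matches Pp Pm M0 M1 C0 C1) :
    Set.range (fun p : MatchingPairs Pp Pm M0 M1 C0 C1 => p.1.1) = C0 := by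
  refine Set.ext fun u => ⟨fun ⟨p, hp⟩ => hp ▸ p.2.1, fun hu => ?_⟩
  obtain ⟨v, hv, huv⟩ := h.1 u hu
  exact ⟨⟨(u, v), hu, hv, huv⟩, rfl⟩

theorem Matches.range_snd {C0 : Set M0.W} {C1 : Set M1.W} (h : Matches Pp Pm M0 M1 C0 C1) :
    Set.range (fun p : MatchingPairs Pp Pm M0 M1 C0 C1 => p.1.2) = C1 := by
  refine Set.ext fun v => ⟨fun ⟨p, hp⟩ => hp ▸ p.2.2.1, fun hv => ?_⟩
  obtain ⟨u, hu, huv⟩ := h.2 v hv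
  exact ⟨⟨(u, v), hu, hv, huv⟩, rfl⟩

theorem exists_interpolant_frame [Finite M0.W] [Finite M1.W] {w0 : M0.W} {w1 : M1.W}
    {a0 : Bool → M0.W} {a1 : Bool → M1.W} (h0 : M0.TwoClusterCone w0 a0)
    (h1 : M1.TwoClusterCone w1 a1)
    (hm : ∀ b, Matches Pp Pm M0 M1 (M0.cluster (a0 b)) (M1.cluster (a1 b)))
    (hw : ModalArrow Pp Pm 0 M0 w0 M1 w1) :
    ∃ (F : KFrame) (wstar : F.W) (f0 : F.W → M0.W) (f1 : F.W → M1.W),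
      (∀ V : F.W → ℕ → Prop, F.toModel V ∈ C_LVo1) ∧
      PMorphism F M0.toKFrame f0 ∧ PMorphism F M1.toKFrame f1 ∧
      f0 wstar = w0 ∧ f1 wstar = w1 ∧ ∀ x : F.W, ModalArrow Pp Pm 0 M0 (f0 x) M1 (f1 x) := by
  let X b := MatchingPairs Pp Pm M0 M1 (M0.cluster (a0 b)) (M1.cluster (a1 b))
  have (b : Bool) : Nonempty (X b) := ((hm b).range_fst ▸ KModel.mem_cluster_self (a0 b)).nonempty
  refine ⟨TwoClusterFrame.frame X, none, TwoClusterFrame.map w0 fun _ p => p.1.1,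
    TwoClusterFrame.map w1 fun _ p => p.1.2, TwoClusterFrame.toModel_mem X,
    TwoClusterFrame.pMorphism_map h0 fun b => (hm b).range_fst,
    TwoClusterFrame.pMorphism_map h1 fun b => (hm b).range_snd, rfl, rfl, ?_⟩
  rintro (_ | ⟨b, p⟩)
  exacts [hw, p.2.2.2]

end Interpolant

theorem exists_twoClusterCone_of_mem_C_LVo1 {M : KModel} (hM : M ∈ C_LVo1) (w : M.W) :
    ∃ a, M.TwoClusterCone w a := by
  obtain ⟨-, x, C0, C1, hx0, hx1, hdisj, ⟨c0, hc0⟩, ⟨c1, hc1⟩, hcover, hR⟩ := hM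
  have hblock {C : Set M.W} (hC : ∀ u ∈ C, ∀ v, M.R u v ↔ v ∈ C) {u : M.W} (hu : u ∈ C) :
      M.Final u ∧ M.cluster u = C :=
    ⟨fun v hv => (hC v ((hC u hu v).1 hv) u).2 hu,
      Set.ext fun v => ⟨fun hv => (hC u hu v).1 hv.1,
        fun hv => ⟨(hC u hu v).2 hv, (hC v hv u).2 hu⟩⟩⟩
  have hC0 : ∀ u ∈ C0, ∀ v, M.R u v ↔ v ∈ C0 := fun u hu v => by
    refine (hR u v).trans ⟨?_, fun hv => .inr (.inl ⟨hu, hv⟩)⟩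
    rintro (rfl | ⟨-, hv⟩ | ⟨hu1, -⟩ | rfl)
    exacts [hu, hv, (Set.disjoint_left.1 hdisj hu hu1).elim, (hx0 hu).elim]
  have hC1 : ∀ u ∈ C1, ∀ v, M.R u v ↔ v ∈ C1 := fun u hu v => by
    refine (hR u v).trans ⟨?_, fun hv => .inr (.inr (.inl ⟨hu, hv⟩))⟩
    rintro (rfl | ⟨hu0, -⟩ | ⟨-, hv⟩ | rfl)
    exacts [hu, (Set.disjoint_left.1 hdisj hu0 hu).elim, hv, (hx1 hu).elim]
  rcases hcover w with rfl | hw | hw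
  · refine ⟨fun b => bif b then c1 else c0, ⟨Bool.forall_bool.2 ⟨(hblock hC0 hc0).1,
      (hblock hC1 hc1).1⟩, fun v => ?_⟩⟩
    simp only [Bool.exists_bool, cond_false, cond_true, (hblock hC0 hc0).2, (hblock hC1 hc1).2]
    exact ⟨fun _ => hcover v, fun _ => (hR _ v).2 (.inr (.inr (.inr rfl)))⟩
  · exact ⟨_, .of_final (hblock hC0 hw).1⟩
  · exact ⟨_, .of_final (hblock hC1 hw).1⟩

theorem stmt14 : EnjoysIP C_LVo1 3 := by
  intro Pp Pm M0 M1 h0 h1 w0 w1 H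
  have : Finite M0.W := h0.1
  have : Finite M1.W := h1.1
  obtain ⟨a0, ha0⟩ := exists_twoClusterCone_of_mem_C_LVo1 h0 w0
  obtain ⟨a1, ha1⟩ := exists_twoClusterCone_of_mem_C_LVo1 h1 w1
  obtain ⟨σ, hσ⟩ := Bool.exists_perm_forall_of_forall_exists (H.exists_matches_right ha0 ha1)
    (H.exists_matches_left ha0 ha1)
  exact exists_interpolant_frame ha0 (ha1.comp_perm σ) hσ (H.mono (Nat.zero_le 3))
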